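/- Let n be odd, λ = (n+1)/2, and let a_0, a_1, a_2, a_3 be binary sequences of length n and e(0), e(1), e(2) ∈ {0,1}. Let c = I(a_0, e(0)+L^λ(a_1)) and d = I(e(1)+a_2, e(2)+L^λ(a_3)) be the binary sequences of length 2n from Construction I. Then for 0 ≤ τ_0 < n: R_{c,d}(2τ_0) = (−1)^{e(1)} R_{a_0,a_2}(τ_0) + (−1)^{e(0)+e(2)} R_{a_1,a_3}(τ_0), and R_{c,d}(2τ_0 + 1) = (−1)^{e(2)} R_{a_0,a_3}(τ_0 + λ) + (−1)^{e(0)+e(1)} R_{a_1,a_2}(τ_0 + λ), where shift arguments are modulo n. -/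

import Mathlib

/-- Cross-correlation of two sequences of length `N` over `ℤ_H`, with `ξ = exp(2πi/H)`. -/
noncomputable def crossCorr (H N : ℕ) (s t : ZMod N → ZMod H) (τ : ZMod N) : ℂ :=
  ∑ i ∈ Finset.range N,
    Complex.exp (2 * (Real.pi : ℂ) * Complex.I / (H : ℂ)) ^ ((s (i : ZMod N) - t ((i : ZMod N) + τ)).val)

/-- Cross-correlation of two binary sequences of length `N` (an integer). -/
def binCorr (N : ℕ) (s t : ZMod N → ZMod 2) (τ : ZMod N) : ℤ :=
  ∑ i ∈ Finset.range N, (-1 : ℤ) ^ ((s (i : ZMod N) + t ((i : ZMod N) + τ)).val)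

/-- Cross-correlation of two quaternary sequences of length `N`, with `ξ = √-1`. -/
noncomputable def quadCorr (N : ℕ) (s t : ZMod N → ZMod 4) (τ : ZMod N) : ℂ :=
  ∑ i ∈ Finset.range N, Complex.I ^ ((s (i : ZMod N) - t ((i : ZMod N) + τ)).val)

/-- Interleaving `u = I(a, b)`: `u(2i) = a(i)`, `u(2i+1) = b(i)`. -/
def interleaveSeq {H : ℕ} (n : ℕ) (a b : ZMod n → ZMod H) : ZMod (2 * n) → ZMod H :=
  fun k => if k.val % 2 = 0 then a ((k.val / 2 : ℕ) : ZMod n) else b ((k.val / 2 : ℕ) : ZMod n)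

/-- The inverse Gray mapping `φ⁻¹ : ℤ₂ × ℤ₂ → ℤ₄`. -/
def grayInv (a b : ZMod 2) : ZMod 4 :=
  if a = 0 then (if b = 0 then 0 else 1) else (if b = 0 then 3 else 2)

/-- Construction I: the quaternary sequence of length `2n` built from
`a₀, a₁, a₂, a₃` and bits `e₀, e₁, e₂`. -/
def constructionI (n : ℕ) (a0 a1 a2 a3 : ZMod n → ZMod 2)
    (e0 e1 e2 : ZMod 2) : ZMod (2 * n) → ZMod 4 :=
  let lam : ZMod n := (((n + 1) / 2 : ℕ) : ZMod n)
  let c := interleaveSeq n a0 (fun i => e0 + a1 (i + lam))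
  let d := interleaveSeq n (fun i => e1 + a2 i) (fun i => e2 + a3 (i + lam))
  fun i => grayInv (c i) (d i)


/-
Interleaving splits the correlation sum over `ZMod (2n)` into its even and odd positions. At an
even shift `2τ` the even (odd) positions of `c` meet those of `d`, giving `R_{a₀,a₂}(τ)` and a
correlation of the shifted `a₁`, `a₃`; at an odd shift `2τ + 1` even positions meet odd ones, and
the odd-to-even terms pick up an extra shift `τ + 1`. The constant bits only contribute signs, and
shifting the left sequence by `λ` moves the argument by `-λ`; since `n` is odd, `2λ = 1` in
`ZMod n`, so `τ + 1 - λ = τ + λ`.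
-/

lemma neg_one_pow_val_add (x y : ZMod 2) :
    (-1 : ℤ) ^ (x + y).val = (-1 : ℤ) ^ x.val * (-1 : ℤ) ^ y.val := by
  fin_cases x <;> fin_cases y <;> decide

lemma Finset.sum_range_two_mul {M : Type*} [AddCommMonoid M] (n : ℕ) (f : ℕ → M) :
    ∑ i ∈ range (2 * n), f i = ∑ j ∈ range n, f (2 * j) + ∑ j ∈ range n, f (2 * j + 1) := by
  induction n with
  | zero => simp
  | succ m ih =>
    rw [Nat.mul_succ, sum_range_succ, sum_range_succ, sum_range_succ, sum_range_succ, ih]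
    abel

lemma Finset.sum_range_natCast_add {M : Type*} [AddCommMonoid M] (N : ℕ) (f : ZMod N → M)
    (g : ZMod N) : ∑ i ∈ range N, f (i + g) = ∑ i ∈ range N, f i := by
  rcases N.eq_zero_or_pos with rfl | hN
  · simp
  have : NeZero N := ⟨hN.ne'⟩
  have sum_range_eq_sum_univ (h : ZMod N → M) : ∑ i ∈ range N, h i = ∑ x, h x :=
    sum_nbij' (fun i => (i : ZMod N)) ZMod.val (by simp) (by simp [ZMod.val_lt])
      (fun i hi => ZMod.val_cast_of_lt (mem_range.mp hi)) (by simp) (by simp)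
  rw [sum_range_eq_sum_univ (fun x => f (x + g)), sum_range_eq_sum_univ f]
  exact Equiv.sum_comp (Equiv.addRight g) f

section interleaveSeq

variable {H : ℕ} (n : ℕ) (a b : ZMod n → ZMod H) (j : ℕ)

lemma interleaveSeq_natCast_two_mul : interleaveSeq n a b ((2 * j : ℕ) : ZMod (2 * n)) = a j := by
  have hmod : 2 * j % (2 * n) = 2 * (j % n) := Nat.mul_mod_mul_left 2 j n
  rw [interleaveSeq, ZMod.val_natCast, hmod]
  simp [ZMod.natCast_mod]

lemma interleaveSeq_natCast_two_mul_add_one :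
    interleaveSeq n a b ((2 * j + 1 : ℕ) : ZMod (2 * n)) = b j := by
  have hmod : (2 * j + 1) % (2 * n) = 2 * (j % n) + 1 := by
    rw [Nat.add_mod, Nat.mul_mod_mul_left]
    rcases n.eq_zero_or_pos with rfl | hn
    · simp
    · have : j % n < n := Nat.mod_lt j hn
      rw [Nat.one_mod_eq_one.mpr (by omega), Nat.mod_eq_of_lt (by omega)]
  have hdiv : (2 * (j % n) + 1) / 2 = j % n := by omega
  rw [interleaveSeq, ZMod.val_natCast, hmod, if_neg (by omega), hdiv, ZMod.natCast_mod]

end interleaveSeq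

section binCorr

variable {N : ℕ} (s t : ZMod N → ZMod 2) (τ : ZMod N)

lemma binCorr_const_add_left (e : ZMod 2) :
    binCorr N (fun i => e + s i) t τ = (-1 : ℤ) ^ e.val * binCorr N s t τ := by
  simp only [binCorr, Finset.mul_sum, add_assoc, neg_one_pow_val_add]

lemma binCorr_const_add_right (e : ZMod 2) :
    binCorr N s (fun i => e + t i) τ = (-1 : ℤ) ^ e.val * binCorr N s t τ := by
  simp only [binCorr, Finset.mul_sum, add_left_comm _ e, neg_one_pow_val_add]

lemma binCorr_comp_add_right (g : ZMod N) :
    binCorr N s (fun i => t (i + g)) τ = binCorr N s t (τ + g) := by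
  simp only [binCorr, add_assoc]

lemma binCorr_comp_add_left (g : ZMod N) :
    binCorr N (fun i => s (i + g)) t τ = binCorr N s t (τ - g) := by
  rw [binCorr, binCorr,
    ← Finset.sum_range_natCast_add N (fun x => (-1 : ℤ) ^ (s x + t (x + (τ - g))).val) g]
  simp only [add_assoc, add_sub_cancel]

variable (n : ℕ) (a b a' b' : ZMod n → ZMod 2) (τ : ℕ)

lemma binCorr_interleaveSeq_two_mul :
    binCorr (2 * n) (interleaveSeq n a b) (interleaveSeq n a' b') ((2 * τ : ℕ) : ZMod (2 * n)) =
      binCorr n a a' τ + binCorr n b b' τ := by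
  rw [binCorr, Finset.sum_range_two_mul]
  congr 1 <;> refine Finset.sum_congr rfl fun j _ => ?_
  · rw [← Nat.cast_add, ← mul_add, interleaveSeq_natCast_two_mul, interleaveSeq_natCast_two_mul,
      Nat.cast_add]
  · rw [← Nat.cast_add, show 2 * j + 1 + 2 * τ = 2 * (j + τ) + 1 by ring,
      interleaveSeq_natCast_two_mul_add_one, interleaveSeq_natCast_two_mul_add_one, Nat.cast_add]

lemma binCorr_interleaveSeq_two_mul_add_one :
    binCorr (2 * n) (interleaveSeq n a b) (interleaveSeq n a' b')
        ((2 * τ + 1 : ℕ) : ZMod (2 * n)) =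
      binCorr n a b' τ + binCorr n b a' ((τ : ZMod n) + 1) := by
  rw [binCorr, Finset.sum_range_two_mul]
  congr 1 <;> refine Finset.sum_congr rfl fun j _ => ?_
  · rw [← Nat.cast_add, show 2 * j + (2 * τ + 1) = 2 * (j + τ) + 1 by ring,
      interleaveSeq_natCast_two_mul, interleaveSeq_natCast_two_mul_add_one, Nat.cast_add]
  · rw [← Nat.cast_add, show 2 * j + 1 + (2 * τ + 1) = 2 * (j + τ + 1) by ring,
      interleaveSeq_natCast_two_mul_add_one, interleaveSeq_natCast_two_mul, Nat.cast_add,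
      Nat.cast_add, Nat.cast_one, add_assoc]

end binCorr

lemma two_mul_natCast_half_succ_eq_one {n : ℕ} (hn : Odd n) :
    2 * (((n + 1) / 2 : ℕ) : ZMod n) = 1 := by
  obtain ⟨k, rfl⟩ := hn
  have : (2 * k + 1 + 1) / 2 = k + 1 := by omega
  rw [this]
  have hzero := ZMod.natCast_self (2 * k + 1)
  push_cast at hzero ⊢
  linear_combination hzero

theorem stmt7_general (n : ℕ) (hn : Odd n) (a0 a1 a2 a3 : ZMod n → ZMod 2) (e0 e1 e2 : ZMod 2)
    (c d : ZMod (2 * n) → ZMod 2)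
    (hc : c = interleaveSeq n a0 (fun i => e0 + a1 (i + (((n + 1) / 2 : ℕ) : ZMod n))))
    (hd : d = interleaveSeq n (fun i => e1 + a2 i)
      (fun i => e2 + a3 (i + (((n + 1) / 2 : ℕ) : ZMod n))))
    (τ0 : ℕ) :
    binCorr (2 * n) c d ((2 * τ0 : ℕ) : ZMod (2 * n)) =
        (-1 : ℤ) ^ e1.val * binCorr n a0 a2 (τ0 : ZMod n) +
          (-1 : ℤ) ^ (e0 + e2).val * binCorr n a1 a3 (τ0 : ZMod n) ∧
      binCorr (2 * n) c d ((2 * τ0 + 1 : ℕ) : ZMod (2 * n)) =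
        (-1 : ℤ) ^ e2.val *
            binCorr n a0 a3 ((τ0 : ZMod n) + (((n + 1) / 2 : ℕ) : ZMod n)) +
          (-1 : ℤ) ^ (e0 + e1).val *
            binCorr n a1 a2 ((τ0 : ZMod n) + (((n + 1) / 2 : ℕ) : ZMod n)) := by
  subst hc hd
  set lam : ZMod n := (((n + 1) / 2 : ℕ) : ZMod n)
  have hlam : (τ0 : ZMod n) + 1 - lam = τ0 + lam := by
    linear_combination -two_mul_natCast_half_succ_eq_one hn
  rw [binCorr_interleaveSeq_two_mul, binCorr_interleaveSeq_two_mul_add_one]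
  simp only [binCorr_const_add_left, binCorr_const_add_right, binCorr_comp_add_left,
    binCorr_comp_add_right, neg_one_pow_val_add, add_sub_cancel_right, hlam]
  constructor <;> ring

theorem stmt7 (n : ℕ) (hn : Odd n) (a0 a1 a2 a3 : ZMod n → ZMod 2) (e0 e1 e2 : ZMod 2)
    (c d : ZMod (2 * n) → ZMod 2)
    (hc : c = interleaveSeq n a0 (fun i => e0 + a1 (i + (((n + 1) / 2 : ℕ) : ZMod n))))
    (hd : d = interleaveSeq n (fun i => e1 + a2 i)
      (fun i => e2 + a3 (i + (((n + 1) / 2 : ℕ) : ZMod n))))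
    (τ0 : ℕ) (hτ0 : τ0 < n) :
    binCorr (2 * n) c d ((2 * τ0 : ℕ) : ZMod (2 * n)) =
        (-1 : ℤ) ^ e1.val * binCorr n a0 a2 (τ0 : ZMod n) +
          (-1 : ℤ) ^ (e0 + e2).val * binCorr n a1 a3 (τ0 : ZMod n) ∧
      binCorr (2 * n) c d ((2 * τ0 + 1 : ℕ) : ZMod (2 * n)) =
        (-1 : ℤ) ^ e2.val *
            binCorr n a0 a3 ((τ0 : ZMod n) + (((n + 1) / 2 : ℕ) : ZMod n)) +
          (-1 : ℤ) ^ (e0 + e1).val *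
            binCorr n a1 a2 ((τ0 : ZMod n) + (((n + 1) / 2 : ℕ) : ZMod n)) :=
  stmt7_general n hn a0 a1 a2 a3 e0 e1 e2 c d hc hd τ0
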